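/- For every positive integer m, there exists a polynomial p with real coefficients of degree exactly m such that for every integer n ≥ max(m−1, 1), v(m,n) = p(n). -/

import Mathlib

open MeasureTheory

/-- The vertex set of the partial permutohedron: vectors in `{0,1,…,n}^m`
whose nonzero entries are pairwise distinct. -/
def ppVertices (m n : ℕ) : Set (Fin m → ℝ) :=
  {x | (∀ i, ∃ k : ℕ, k ≤ n ∧ x i = k) ∧
       ∀ i j : Fin m, i ≠ j → x i ≠ 0 → x j ≠ 0 → x i ≠ x j}

/-- The partial permutohedron `P(m,n)`. -/
def partialPermutohedron (m n : ℕ) : Set (Fin m → ℝ) :=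
  convexHull ℝ (ppVertices m n)

/-- The normalized volume `v(m,n) = m!·vol(P(m,n))`. -/
noncomputable def nvol (m n : ℕ) : ℝ :=
  (m.factorial : ℝ) * (volume (partialPermutohedron m n)).toReal


/-!
If `m ≤ n + 1`, the convex hull of `ppVertices m (n + 1)` is that of `ppVertices m n` plus the
cube `[0,1]^m`: the sum of a vertex and a `0/1`-vector lies below the staircase `(n+1, n, …, 1)`,
and every integer vector below the staircase is a convex combination of vertices, by repeatedly
writing a tie `(c, c)` as the midpoint of `(c+1, c-1)` and `(c-1, c+1)`. Hence
`P(m, n₀ + t) = P(m, n₀) + [0,t]^m` for `n₀ = max (m-1) 1`. Adding the cube one coordinate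
segment at a time, Fubini gives `vol (K + [0,t] eᵢ) = vol K + t · vol (πᵢ K)` for compact convex
`K`, so the volume is a polynomial in `t` of degree at most `m`, and exactly `m` because
`[0,t]^m ⊆ P(m, n₀ + t)`.
-/

open Set Finset Pointwise Polynomial Filter

theorem mem_ppVertices_iff {m n : ℕ} {x : Fin m → ℝ} :
    x ∈ ppVertices m n ↔ ∃ y : Fin m → ℕ,
      (∀ i, y i ≤ n) ∧ {i | y i ≠ 0}.InjOn y ∧ x = fun i => (y i : ℝ) := by
  constructor
  · rintro ⟨hx, hinj⟩
    choose y hyn hxy using hx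
    refine ⟨y, hyn, fun i hi j hj hij => ?_, funext hxy⟩
    by_contra hne
    exact hinj i j hne (by simpa [hxy] using hi) (by simpa [hxy] using hj) (by simp [hxy, hij])
  · rintro ⟨y, hyn, hinj, rfl⟩
    refine ⟨fun i => ⟨y i, hyn i, rfl⟩, fun i j hij hi hj heq => hij (hinj ?_ ?_ ?_)⟩ <;>
      simp_all

theorem ppVertices_finite (m n : ℕ) : (ppVertices m n).Finite := by
  refine (Set.finite_range fun (y : Fin m → Fin (n + 1)) i => ((y i : ℕ) : ℝ)).subset ?_
  rintro x hx
  obtain ⟨y, hyn, -, rfl⟩ := mem_ppVertices_iff.1 hx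
  exact ⟨fun i => ⟨y i, Nat.lt_succ_of_le (hyn i)⟩, rfl⟩

theorem zero_mem_ppVertices (m n : ℕ) : (0 : Fin m → ℝ) ∈ ppVertices m n :=
  mem_ppVertices_iff.2
    ⟨0, fun _ => n.zero_le, fun _ hi => absurd rfl hi, funext fun _ => Nat.cast_zero.symm⟩

section Staircase

variable {ι : Type*} [Fintype ι]

/-- Sorted decreasingly, the `j`-th entry of `y` is at most `n + 1 - j`, phrased by counting:
at most `n + 1 - k` entries are `≥ k`. -/
def BelowStaircase (n : ℕ) (y : ι → ℕ) : Prop :=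
  ∀ k ∈ Finset.Icc 1 (n + 1), #{i | k ≤ y i} + k ≤ n + 1

theorem BelowStaircase.le {n : ℕ} {y : ι → ℕ} (hy : BelowStaircase n y) (i : ι) : y i ≤ n := by
  by_contra! h
  have := hy (n + 1) (by simp)
  have : 0 < #{i | n + 1 ≤ y i} := Finset.card_pos.2 ⟨i, by simpa using h⟩
  omega

theorem BelowStaircase.sum_sq_le {n : ℕ} {y : ι → ℕ} (hy : BelowStaircase n y) :
    ∑ i, y i ^ 2 ≤ Fintype.card ι * n ^ 2 := by
  simpa using
    Finset.sum_le_sum fun i (_ : i ∈ Finset.univ) => Nat.pow_le_pow_left (hy.le i) 2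

theorem belowStaircase_succ_add {n : ℕ} {y e : ι → ℕ} (hι : Fintype.card ι ≤ n + 1)
    (hy : ∀ i, y i ≤ n) (hinj : {i | y i ≠ 0}.InjOn y) (he : ∀ i, e i ≤ 1) :
    BelowStaircase (n + 1) (y + e) := by
  intro k hk
  rw [Finset.mem_Icc] at hk
  obtain rfl | hk2 := eq_or_lt_of_le hk.1
  · have := Finset.card_filter_le Finset.univ fun i => 1 ≤ (y + e) i
    rw [Finset.card_univ] at this
    omega
  · -- the entries `≥ k` of `y + e` come from distinct nonzero entries of `y` in `[k - 1, n]`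
    have hcard : #{i | k ≤ (y + e) i} ≤ #(Finset.Icc (k - 1) n) := by
      refine Finset.card_le_card_of_injOn y (fun i hi => ?_) (fun i hi j hj hij => ?_)
      · have := he i
        simp only [Finset.coe_filter, Finset.mem_univ, true_and, Set.mem_ofPred_eq,
          Pi.add_apply] at hi
        simp only [Finset.coe_Icc, Set.mem_Icc]
        exact ⟨by omega, hy i⟩
      · simp only [Finset.coe_filter, Finset.mem_univ, true_and, Set.mem_ofPred_eq,
          Pi.add_apply] at hi hj
        have := he i; have := he j
        exact hinj (show y i ≠ 0 by omega) (show y j ≠ 0 by omega) hij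
    rw [Nat.card_Icc] at hcard
    omega

end Staircase

section RaiseLower

variable {ι : Type*} [DecidableEq ι]

def raiseLower (y : ι → ℕ) (i j : ι) : ι → ℕ :=
  Function.update (Function.update y i (y i + 1)) j (y j - 1)

variable {y : ι → ℕ} {i j : ι}

theorem raiseLower_apply (l : ι) :
    raiseLower y i j l = if l = j then y j - 1 else if l = i then y i + 1 else y l := by
  simp only [raiseLower, Function.update_apply]

theorem raiseLower_add_raiseLower (hij : i ≠ j) (hyij : y i = y j) (hj : 1 ≤ y j) (l : ι) :
    (raiseLower y i j l : ℝ) + raiseLower y j i l = 2 * y l := by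
  have hi : 1 ≤ y i := hyij ▸ hj
  rw [raiseLower_apply, raiseLower_apply]
  split_ifs <;> subst_vars <;> push_cast [Nat.cast_sub hi, Nat.cast_sub hj] <;> grind

variable [Fintype ι]

theorem belowStaircase_raiseLower {n : ℕ} (hy : BelowStaircase n y) (hij : i ≠ j)
    (hyij : y i = y j) (hj : 1 ≤ y j) : BelowStaircase n (raiseLower y i j) := by
  intro k hk
  by_cases hkj : k = y j + 1
  · subst hkj
    have hj_mem : j ∈ ({l | y j ≤ y l} : Finset ι) := by simp
    have hsub : ({l | y j + 1 ≤ raiseLower y i j l} : Finset ι) ⊆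
        ({l | y j ≤ y l} : Finset ι).erase j := by
      intro l
      simp only [Finset.mem_filter, Finset.mem_univ, true_and, Finset.mem_erase,
        raiseLower_apply]
      grind
    have := Finset.card_le_card hsub
    rw [Finset.card_erase_of_mem hj_mem] at this
    have := hy (y j) (Finset.mem_Icc.2 ⟨hj, by simp at hk; omega⟩)
    have := Finset.card_pos.2 ⟨j, hj_mem⟩
    omega
  · have hsub : ({l | k ≤ raiseLower y i j l} : Finset ι) ⊆ ({l | k ≤ y l} : Finset ι) := by
      intro l
      simp only [Finset.mem_filter, Finset.mem_univ, true_and, raiseLower_apply]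
      split_ifs <;> subst_vars <;> omega
    have := Finset.card_le_card hsub
    have := hy k hk
    omega

theorem sum_sq_raiseLower (hij : i ≠ j) (hyij : y i = y j) (hj : 1 ≤ y j) :
    ∑ l, raiseLower y i j l ^ 2 = ∑ l, y l ^ 2 + 2 := by
  rw [← Finset.sum_add_sum_compl {i, j}, ← Finset.sum_add_sum_compl {i, j} (fun l => y l ^ 2),
    Finset.sum_pair hij, Finset.sum_pair hij, Finset.sum_congr rfl (g := fun l => y l ^ 2)]
  · obtain ⟨c, hc⟩ : ∃ c, y j = c + 1 := ⟨y j - 1, by omega⟩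
    simp only [raiseLower_apply, if_neg hij, if_neg hij.symm, if_true, hyij, hc,
      Nat.add_sub_cancel]
    ring
  · intro l hl
    simp only [Finset.mem_compl, Finset.mem_insert, Finset.mem_singleton, not_or] at hl
    simp only [raiseLower_apply, if_neg hl.1, if_neg hl.2]

end RaiseLower

theorem natCast_mem_convexHull_ppVertices {m n : ℕ} {y : Fin m → ℕ}
    (hy : BelowStaircase n y) : (fun i => (y i : ℝ)) ∈ convexHull ℝ (ppVertices m n) := by
  -- each exchange raises `∑ y i ^ 2`, which is bounded on vectors below the staircase
  induction hd : m * n ^ 2 - ∑ i, y i ^ 2 using Nat.strong_induction_on generalizing y with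
  | _ d ih =>
  by_cases hinj : {i | y i ≠ 0}.InjOn y
  · exact subset_convexHull ℝ _ (mem_ppVertices_iff.2 ⟨y, hy.le, hinj, rfl⟩)
  obtain ⟨i, hi, j, -, hyij, hij⟩ : ∃ i, y i ≠ 0 ∧ ∃ j, y j ≠ 0 ∧ y i = y j ∧ i ≠ j := by
    simpa [Set.InjOn] using hinj
  have hj : 1 ≤ y j := by omega
  have hexchange : ∀ {a b : Fin m}, a ≠ b → y a = y b → 1 ≤ y b →
      (fun l => (raiseLower y a b l : ℝ)) ∈ convexHull ℝ (ppVertices m n) := by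
    intro a b hab hyab hb
    have hy' := belowStaircase_raiseLower hy hab hyab hb
    have hbound := hy'.sum_sq_le
    rw [Fintype.card_fin] at hbound
    have := sum_sq_raiseLower hab hyab hb
    exact ih _ (by omega) hy' rfl
  have hmid : (fun l => (y l : ℝ)) = (1 / 2 : ℝ) • (fun l => (raiseLower y i j l : ℝ)) +
      (1 / 2 : ℝ) • (fun l => (raiseLower y j i l : ℝ)) := by
    ext l
    have := raiseLower_add_raiseLower hij hyij hj l
    simp only [Pi.add_apply, Pi.smul_apply, smul_eq_mul]
    linarith
  rw [hmid]
  exact convex_convexHull ℝ _ (hexchange hij hyij hj)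
    (hexchange hij.symm hyij.symm (hyij ▸ hj)) (by norm_num) (by norm_num) (by norm_num)

theorem Set.univ_pi_add_univ_pi {ι : Type*} {α : ι → Type*} [∀ i, Add (α i)]
    (s t : ∀ i, Set (α i)) : univ.pi s + univ.pi t = univ.pi (s + t) := by
  ext x
  constructor
  · rintro ⟨u, hu, v, hv, rfl⟩ i -
    exact ⟨u i, hu i trivial, v i, hv i trivial, rfl⟩
  · intro hx
    choose u hu v hv huv using fun i => hx i trivial
    exact ⟨u, fun i _ => hu i, v, fun i _ => hv i, funext huv⟩

section CoordBox

variable {ι : Type*} [DecidableEq ι]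

def coordBox (L : Finset ι) (t : ℝ) : Set (ι → ℝ) :=
  univ.pi fun i => if i ∈ L then Icc 0 t else {0}

theorem convex_coordBox (L : Finset ι) (t : ℝ) : Convex ℝ (coordBox L t) :=
  convex_pi fun i _ => by
    split_ifs
    exacts [convex_Icc 0 t, convex_singleton 0]

theorem isCompact_coordBox (L : Finset ι) (t : ℝ) : IsCompact (coordBox L t) :=
  isCompact_univ_pi fun i => by
    split_ifs
    exacts [isCompact_Icc, isCompact_singleton]

theorem coordBox_empty (t : ℝ) : coordBox (∅ : Finset ι) t = {0} := by
  simpa [coordBox] using Set.univ_pi_singleton (0 : ι → ℝ)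

theorem add_coordBox_empty (K : Set (ι → ℝ)) (t : ℝ) : K + coordBox ∅ t = K := by
  simp [coordBox_empty]

theorem coordBox_zero (L : Finset ι) : coordBox L 0 = {0} := by
  simpa [coordBox] using Set.univ_pi_singleton (0 : ι → ℝ)

theorem coordBox_add_coordBox (L : Finset ι) {a b : ℝ} (ha : 0 ≤ a) (hb : 0 ≤ b) :
    coordBox L a + coordBox L b = coordBox L (a + b) := by
  rw [coordBox, coordBox, Set.univ_pi_add_univ_pi, coordBox]
  congr! 2 with i
  by_cases hi : i ∈ L
  · simpa [hi] using Set.Icc_add_Icc ha hb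
  · simp [hi]

theorem coordBox_insert {L : Finset ι} {i : ι} (hi : i ∉ L) (t : ℝ) :
    coordBox (insert i L) t = coordBox L t + coordBox {i} t := by
  rw [coordBox, coordBox, coordBox, Set.univ_pi_add_univ_pi]
  congr! 2 with j
  by_cases hj : j = i
  · subst hj
    simp [hi]
  · simp [hj]

theorem coordBox_univ_one [Fintype ι] :
    coordBox (Finset.univ : Finset ι) 1 = convexHull ℝ (univ.pi fun _ => {0, 1}) := by
  simp [coordBox, segment_eq_Icc]

theorem volume_coordBox_univ [Fintype ι] (t : ℝ) :
    volume (coordBox (Finset.univ : Finset ι) t) = ENNReal.ofReal t ^ Fintype.card ι := by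
  simp [coordBox, Real.volume_Icc_pi]

end CoordBox

theorem ppVertices_succ_subset_add (m n : ℕ) :
    ppVertices m (n + 1) ⊆ ppVertices m n + univ.pi fun _ => ({0, 1} : Set ℝ) := by
  intro x hx
  obtain ⟨z, hzn, hinj, rfl⟩ := mem_ppVertices_iff.1 hx
  set e : Fin m → ℕ := fun i => if z i = 0 then 0 else 1 with he
  refine ⟨fun i => ((z i - e i : ℕ) : ℝ),
    mem_ppVertices_iff.2 ⟨fun i => z i - e i, ?_, ?_, rfl⟩, fun i => (e i : ℝ), fun i _ => ?_, ?_⟩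
  · intro i
    have := hzn i
    simp only [he]
    split_ifs <;> omega
  · intro i hi j hj hij
    simp only [he, Set.mem_ofPred_eq] at hi hj hij
    split_ifs at hi hj hij with h1 h2 h2 <;> first | omega | exact hinj h1 h2 (by omega)
  · simp only [he]
    split_ifs <;> simp
  · funext i
    simp only [he, Pi.add_apply]
    split_ifs with h
    · simp [h]
    · rw [Nat.cast_sub (by omega)]
      ring

theorem ppVertices_add_subset_convexHull {m n : ℕ} (hm : m ≤ n + 1) :
    ppVertices m n + (univ.pi fun _ => ({0, 1} : Set ℝ)) ⊆
      convexHull ℝ (ppVertices m (n + 1)) := by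
  rintro _ ⟨v, hv, ε, hε, rfl⟩
  obtain ⟨y, hyn, hinj, rfl⟩ := mem_ppVertices_iff.1 hv
  set e : Fin m → ℕ := fun i => if ε i = 0 then 0 else 1 with he
  have hεe : ε = fun i => (e i : ℝ) := by
    funext i
    rcases hε i trivial with h | h <;> simp_all
  have hbelow : BelowStaircase (n + 1) (y + e) :=
    belowStaircase_succ_add (by simpa using hm) hyn hinj fun i => by
      simp only [he]
      split_ifs <;> omega
  convert natCast_mem_convexHull_ppVertices hbelow using 1
  rw [hεe]
  funext i
  simp

theorem convexHull_ppVertices_succ {m n : ℕ} (hm : m ≤ n + 1) :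
    convexHull ℝ (ppVertices m (n + 1)) = convexHull ℝ (ppVertices m n) + coordBox univ 1 := by
  rw [coordBox_univ_one, ← convexHull_add]
  exact (convexHull_mono (ppVertices_succ_subset_add m n)).antisymm
    (convexHull_min (ppVertices_add_subset_convexHull hm) (convex_convexHull ℝ _))

theorem convexHull_ppVertices_add {m n : ℕ} (hm : m ≤ n + 1) (t : ℕ) :
    convexHull ℝ (ppVertices m (n + t)) =
      convexHull ℝ (ppVertices m n) + coordBox univ (t : ℝ) := by
  induction t with
  | zero => simp [coordBox_zero]
  | succ t ih =>
    rw [← add_assoc, convexHull_ppVertices_succ (by omega), ih, add_assoc,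
      coordBox_add_coordBox _ t.cast_nonneg zero_le_one, Nat.cast_succ]

theorem IsCompact.volume_add_Icc {C : Set ℝ} (hC : IsCompact C) (hCc : Convex ℝ C)
    (hne : C.Nonempty) {t : ℝ} (ht : 0 ≤ t) :
    volume (C + Icc 0 t) = volume C + ENNReal.ofReal t := by
  have hle : sInf C ≤ sSup C := csInf_le_csSup hne hC.bddBelow hC.bddAbove
  rw [eq_Icc_of_connected_compact ⟨hne, hCc.isPreconnected⟩ hC, Set.Icc_add_Icc hle ht,
    add_zero, Real.volume_Icc, Real.volume_Icc, add_sub_right_comm,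
    ENNReal.ofReal_add (by linarith) ht]

theorem IsCompact.volume_prod_add_Icc_prod_zero {E : Type*} [NormedAddCommGroup E]
    [NormedSpace ℝ E] [MeasurableSpace E] [BorelSpace E] (μ : Measure E) [SFinite μ]
    {A : Set (ℝ × E)} (hA : IsCompact A) (hAc : Convex ℝ A) {t : ℝ} (ht : 0 ≤ t) :
    (volume.prod μ) (A + Icc 0 t ×ˢ {0}) =
      volume.prod μ A + ENNReal.ofReal t * μ (Prod.snd '' A) := by
  -- Fubini over the slices `{x | (x, y) ∈ A}`, each of which grows by a segment of length `t`
  set slice : E → Set ℝ := fun y => (fun x => (x, y)) ⁻¹' A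
  have hslice_add : ∀ y, (fun x => (x, y)) ⁻¹' (A + Icc 0 t ×ˢ {0}) = slice y + Icc 0 t := by
    intro y
    ext x
    constructor
    · rintro ⟨⟨a, b⟩, hab, ⟨s, z⟩, ⟨hs, rfl : z = 0⟩, hx⟩
      obtain ⟨rfl, rfl⟩ : a + s = x ∧ b + 0 = y := Prod.ext_iff.1 hx
      exact ⟨a, by simpa [slice] using hab, s, hs, rfl⟩
    · rintro ⟨a, ha, s, hs, rfl⟩
      exact ⟨(a, y), ha, (s, 0), ⟨hs, rfl⟩, by simp⟩
  have hslice_volume : ∀ y, volume (slice y + Icc 0 t) =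
      volume (slice y) + (Prod.snd '' A).indicator (fun _ => ENNReal.ofReal t) y := by
    intro y
    by_cases hy : y ∈ Prod.snd '' A
    · have hslice : slice y = Prod.fst '' (A ∩ univ ×ˢ {y}) := by
        ext x
        simp [slice]
      rw [Set.indicator_of_mem hy]
      refine IsCompact.volume_add_Icc ?_ ?_ ?_ ht
      · rw [hslice]
        exact (hA.inter_right (isClosed_univ.prod isClosed_singleton)).image continuous_fst
      · rw [hslice]
        exact (hAc.inter (convex_univ.prod (convex_singleton y))).linear_image
          (LinearMap.fst ℝ ℝ E)
      · obtain ⟨⟨a, b⟩, hab, rfl⟩ := hy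
        exact ⟨a, hab⟩
    · have : slice y = ∅ := Set.eq_empty_of_forall_notMem fun x hx => hy ⟨(x, y), hx, rfl⟩
      rw [this, Set.empty_add, Set.indicator_of_notMem hy, measure_empty, add_zero]
  have hmeas : MeasurableSet (Prod.snd '' A) := (hA.image continuous_snd).measurableSet
  rw [Measure.prod_apply_symm (hA.add (isCompact_Icc.prod isCompact_singleton)).measurableSet,
    Measure.prod_apply_symm hA.measurableSet]
  simp_rw [hslice_add, hslice_volume]
  rw [lintegral_add_left (measurable_measure_prodMk_right hA.measurableSet),
    lintegral_indicator_const hmeas]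

theorem MeasurableEquiv.piFinSuccAbove_image_univ_pi {k : ℕ} {α : Fin (k + 1) → Type*}
    [∀ j, MeasurableSpace (α j)] (i : Fin (k + 1)) (s : ∀ j, Set (α j)) :
    MeasurableEquiv.piFinSuccAbove α i '' univ.pi s =
      s i ×ˢ univ.pi fun j => s (i.succAbove j) := by
  rw [MeasurableEquiv.image_eq_preimage_symm]
  ext ⟨a, y⟩
  simp [Fin.forall_iff_succAbove i]

theorem Fin.removeNth_image_add {k : ℕ} {α : Type*} [Add α] (i : Fin (k + 1))
    (A B : Set (Fin (k + 1) → α)) :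
    i.removeNth '' (A + B) = i.removeNth '' A + i.removeNth '' B :=
  Set.image_image2_distrib fun _ _ => rfl

theorem volume_add_coordBox_singleton {k : ℕ} (i : Fin (k + 1)) {X : Set (Fin (k + 1) → ℝ)}
    (hX : IsCompact X) (hXc : Convex ℝ X) {t : ℝ} (ht : 0 ≤ t) :
    volume (X + coordBox {i} t) = volume X + ENNReal.ofReal t * volume (i.removeNth '' X) := by
  set e := MeasurableEquiv.piFinSuccAbove (fun _ => ℝ) i
  have he : ∀ S, volume (e '' S) = volume S := fun S => by
    rw [e.image_eq_preimage_symm,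
      ((volume_preserving_piFinSuccAbove (fun _ => ℝ) i).symm e).measure_preimage_equiv]
  have hebox : e '' coordBox {i} t = Icc 0 t ×ˢ {0} := by
    rw [coordBox, MeasurableEquiv.piFinSuccAbove_image_univ_pi]
    simpa [Fin.succAbove_ne] using
      congrArg (Icc 0 t ×ˢ ·) (Set.univ_pi_singleton (0 : Fin k → ℝ))
  have heX : Prod.snd '' (e '' X) = i.removeNth '' X := Set.image_image _ _ _
  have hadd : e '' (X + coordBox {i} t) = e '' X + e '' coordBox {i} t :=
    Set.image_image2_distrib fun _ _ => rfl
  rw [← he, hadd, hebox, ← he X, ← heX, Measure.volume_eq_prod]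
  exact IsCompact.volume_prod_add_Icc_prod_zero _
    (hX.image ((continuous_apply i).prodMk (continuous_pi fun _ => continuous_apply _)))
    (hXc.is_linear_image ⟨fun _ _ => rfl, fun _ _ => rfl⟩) ht

theorem removeNth_image_coordBox {k : ℕ} (i : Fin (k + 1)) {L : Finset (Fin (k + 1))}
    (hi : i ∉ L) (t : ℝ) :
    i.removeNth '' coordBox L t =
      coordBox (L.preimage i.succAbove Fin.succAbove_right_injective.injOn) t := by
  have : i.removeNth '' coordBox L t =
      Prod.snd '' (MeasurableEquiv.piFinSuccAbove (fun _ => ℝ) i '' coordBox L t) := by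
    rw [Set.image_image]
    rfl
  rw [this, coordBox, MeasurableEquiv.piFinSuccAbove_image_univ_pi,
    Set.snd_image_prod (by simp [hi]), coordBox]
  simp

theorem exists_polynomial_volume_add_coordBox {k : ℕ} (L : Finset (Fin k))
    {K : Set (Fin k → ℝ)} (hK : IsCompact K) (hKc : Convex ℝ K) :
    ∃ q : ℝ[X], q.natDegree ≤ #L ∧
      ∀ t, 0 ≤ t → (volume (K + coordBox L t)).toReal = q.eval t := by
  induction k with
  | zero =>
    obtain rfl := Finset.eq_empty_of_isEmpty L
    exact ⟨C (volume K).toReal, by simp, fun t _ => by rw [add_coordBox_empty, eval_C]⟩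
  | succ k ih =>
    induction L using Finset.induction_on with
    | empty => exact ⟨C (volume K).toReal, by simp, fun t _ => by rw [add_coordBox_empty, eval_C]⟩
    | insert i L hi ihL =>
      obtain ⟨q₁, hq₁, hvol₁⟩ := ihL
      have hK' : IsCompact (i.removeNth '' K) :=
        hK.image (continuous_pi fun _ => continuous_apply _)
      obtain ⟨q₂, hq₂, hvol₂⟩ := ih (L.preimage i.succAbove Fin.succAbove_right_injective.injOn)
        hK' (hKc.is_linear_image ⟨fun _ _ => rfl, fun _ _ => rfl⟩)
      have hcard : #(L.preimage i.succAbove Fin.succAbove_right_injective.injOn) ≤ #L := by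
        rw [Finset.card_preimage]
        exact Finset.card_filter_le _ _
      refine ⟨q₁ + X * q₂, ?_, fun t ht => ?_⟩
      · rw [Finset.card_insert_of_notMem hi]
        refine (natDegree_add_le _ _).trans (max_le (by omega) ?_)
        exact natDegree_mul_le.trans (by rw [natDegree_X]; omega)
      · have hKL := hK.add (isCompact_coordBox L t)
        rw [coordBox_insert hi, ← add_assoc,
          volume_add_coordBox_singleton i hKL (hKc.add (convex_coordBox L t)) ht,
          Fin.removeNth_image_add, removeNth_image_coordBox i hi, ENNReal.toReal_add,
          ENNReal.toReal_mul, ENNReal.toReal_ofReal ht, hvol₁ t ht, hvol₂ t ht, eval_add,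
          eval_mul, eval_X]
        · exact hKL.measure_ne_top
        · exact ENNReal.mul_ne_top ENNReal.ofReal_ne_top
            (hK'.add (isCompact_coordBox _ t)).measure_ne_top

theorem Polynomial.degree_eq_of_natDegree_le_of_pow_le_eval {q : ℝ[X]} {m : ℕ}
    (hq : q.natDegree ≤ m) (hpow : ∀ t, 0 ≤ t → t ^ m ≤ q.eval t) : q.degree = m := by
  have hq0 : q ≠ 0 := by
    rintro rfl
    exact absurd (hpow 1 zero_le_one) (by simp)
  rw [degree_eq_natDegree hq0, Nat.cast_inj]
  refine hq.antisymm (not_lt.1 fun hlt => ?_)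
  -- otherwise `X ^ m - q` has positive leading coefficient, so is eventually positive
  have hqm : q.degree < m := by
    rw [degree_eq_natDegree hq0]
    exact_mod_cast hlt
  have hdeg : (X ^ m - q).degree = (m : WithBot ℕ) := by
    rw [degree_sub_eq_left_of_degree_lt] <;> simp [hqm]
  have hlead : (X ^ m - q : ℝ[X]).leadingCoeff = 1 := by
    rw [leadingCoeff_sub_of_degree_lt] <;> simp [hqm]
  have htendsto := (X ^ m - q).tendsto_atTop_of_leadingCoeff_nonneg
    (by rw [hdeg]; exact_mod_cast (Nat.zero_le _).trans_lt hlt) (by rw [hlead]; exact zero_le_one)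
  obtain ⟨t, hpos, ht⟩ := ((htendsto.eventually_gt_atTop 0).and (eventually_ge_atTop 0)).exists
  simp only [eval_sub, eval_pow, eval_X, sub_pos] at hpos
  exact (hpow t ht).not_gt hpos

theorem nvol_polynomial_general (m : ℕ) :
    ∃ p : Polynomial ℝ, p.degree = m ∧
      ∀ n : ℕ, max (m - 1) 1 ≤ n → nvol m n = p.eval (n : ℝ) := by
  set n₀ := max (m - 1) 1
  set K := convexHull ℝ (ppVertices m n₀)
  have hK : IsCompact K := (ppVertices_finite m n₀).isCompact_convexHull (𝕜 := ℝ)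
  obtain ⟨q, hq_deg, hq⟩ := exists_polynomial_volume_add_coordBox univ hK (convex_convexHull ℝ _)
  have hpow : ∀ t, 0 ≤ t → t ^ m ≤ q.eval t := by
    intro t ht
    rw [← hq t ht]
    calc t ^ m = (volume (coordBox (univ : Finset (Fin m)) t)).toReal := by
          simp [volume_coordBox_univ, ht]
      _ ≤ (volume (K + coordBox univ t)).toReal :=
        ENNReal.toReal_mono (hK.add (isCompact_coordBox _ _)).measure_ne_top <| measure_mono <|
          Set.subset_add_right _ (subset_convexHull ℝ _ (zero_mem_ppVertices m n₀))
  refine ⟨C (m.factorial : ℝ) * taylor (-(n₀ : ℝ)) q, ?_, fun n hn => ?_⟩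
  · rw [degree_C_mul (by positivity), degree_taylor]
    exact degree_eq_of_natDegree_le_of_pow_le_eval (by simpa using hq_deg) hpow
  · obtain ⟨t, rfl⟩ := Nat.exists_eq_add_of_le hn
    rw [nvol, partialPermutohedron, convexHull_ppVertices_add (by omega) t, hq t t.cast_nonneg]
    simp [taylor_eval]

/-- For fixed `m ≥ 1`, the normalized volume `v(m,n)` with `n ≥ max (m-1) 1`
is given by a polynomial in `n` of degree exactly `m`. -/
theorem nvol_polynomial (m : ℕ) (hm : 0 < m) :
    ∃ p : Polynomial ℝ, p.degree = m ∧
      ∀ n : ℕ, max (m - 1) 1 ≤ n → nvol m n = p.eval (n : ℝ) :=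
  nvol_polynomial_general m
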